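/- (Kirchhoff's phase-cohesive angle law) Let θ_{v_0}, θ_{v_1}, ..., θ_{v_ℓ} ∈ ℝ be angles assigned to the vertices of a closed cycle of length ℓ with v_ℓ = v_0 (so θ_{v_ℓ} = θ_{v_0}), and suppose |d_cc(θ_{v_{j+1}} − θ_{v_j})| < π/2 for every j = 0, ..., ℓ−1. Then the winding number q = (1/2π) Σ_{j=0}^{ℓ−1} d_cc(θ_{v_{j+1}} − θ_{v_j}) is an integer satisfying |q| ≤ ⌈ℓ/4⌉ − 1. -/
import Mathlib


/-- The counterclockwise difference: the unique element of `[-π, π)` congruent to `x`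
modulo `2π`. -/
noncomputable def dcc (x : ℝ) : ℝ :=
  x - 2 * Real.pi * ((⌊(x + Real.pi) / (2 * Real.pi)⌋ : ℤ) : ℝ)

/-- Kirchhoff's phase-cohesive angle law: for angles on a closed cycle of
length `ℓ ≥ 1` with every counterclockwise edge difference of absolute value `< π/2`, the
winding number `q = (1/2π) Σ_j d_cc(θ_{v_{j+1}} - θ_{v_j})` is an integer with
`|q| ≤ ⌈ℓ/4⌉ - 1`. -/
theorem kirchhoff_phase_cohesive_angle_law (ℓ : ℕ) (hℓ : 1 ≤ ℓ) (θ : ℕ → ℝ)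
    (hclosed : θ ℓ = θ 0)
    (hcoh : ∀ j, j < ℓ → |dcc (θ (j + 1) - θ j)| < Real.pi / 2) :
    ∃ q : ℤ,
      (1 / (2 * Real.pi)) * ∑ j ∈ Finset.range ℓ, dcc (θ (j + 1) - θ j) = (q : ℝ) ∧
      |q| ≤ ⌈(ℓ : ℚ) / 4⌉ - 1 := by
  have hπ : (0 : ℝ) < Real.pi := Real.pi_pos
  set q : ℤ := -∑ j ∈ Finset.range ℓ, ⌊(θ (j + 1) - θ j + Real.pi) / (2 * Real.pi)⌋ with hq
  have hsum : ∑ j ∈ Finset.range ℓ, dcc (θ (j + 1) - θ j) = 2 * Real.pi * (q : ℝ) := by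
    unfold dcc
    rw [Finset.sum_sub_distrib, Finset.sum_range_sub (fun j => θ j), hclosed]
    push_cast [hq]
    rw [mul_neg, Finset.mul_sum]
    ring
  refine ⟨q, ?_, ?_⟩
  · rw [hsum]
    field_simp
  · -- |sum| < ℓ * π / 2
    have hlt : |∑ j ∈ Finset.range ℓ, dcc (θ (j + 1) - θ j)| < ℓ * (Real.pi / 2) := by
      calc |∑ j ∈ Finset.range ℓ, dcc (θ (j + 1) - θ j)|
          ≤ ∑ j ∈ Finset.range ℓ, |dcc (θ (j + 1) - θ j)| := Finset.abs_sum_le_sum_abs _ _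
        _ < ∑ j ∈ Finset.range ℓ, (Real.pi / 2) := by
            apply Finset.sum_lt_sum_of_nonempty
            · exact Finset.nonempty_range_iff.mpr (by omega)
            · intro j hj
              exact hcoh j (Finset.mem_range.mp hj)
        _ = ℓ * (Real.pi / 2) := by rw [Finset.sum_const, Finset.card_range]; ring
    rw [hsum, abs_mul, abs_of_pos (by linarith : (0:ℝ) < 2 * Real.pi)] at hlt
    have hq4 : (|q| : ℝ) < ℓ / 4 := by
      rw [← Int.cast_abs] at *
      nlinarith
    have h4 : 4 * |q| < (ℓ : ℤ) := by exact_mod_cast (by push_cast at hq4 ⊢; linarith : ((4 * |q| : ℤ) : ℝ) < ((ℓ : ℤ) : ℝ))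
    have hq4' : (|q| : ℚ) < (ℓ : ℚ) / 4 := by
      have : ((4 * |q| : ℤ) : ℚ) < ((ℓ : ℤ) : ℚ) := by exact_mod_cast h4
      push_cast at this; linarith
    have : (|q| : ℚ) < (⌈(ℓ : ℚ) / 4⌉ : ℚ) := lt_of_lt_of_le hq4' (Int.le_ceil _)
    have : |q| < ⌈(ℓ : ℚ) / 4⌉ := by exact_mod_cast this
    omega
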